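/- arXiv:1611.03570 — 6 statements merged into one kernel-verified Lean document; each statement's English description precedes it below -/
import Mathlib

section
/- A Z^d SFT X has topological strong spatial mixing (equivalently, only finitely many first offenders) if and only if X has the 0-extension property, i.e., there exists a finite set F of forbidden finite patterns inducing X such that every finite pattern containing no pattern from F belongs to the language L(X). -/
open Pointwise Filter

/-- The lattice `ℤ^d`. -/
abbrev Zd (d : ℕ) := Fin d → ℤ

/-- The shift action: `(shift t x) s = x (s + t)`. -/
def shift {A : Type*} {d : ℕ} (t : Zd d) (x : Zd d → A) : Zd d → A :=
  fun s => x (s + t)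

/-- A `ℤ^d` subshift: a closed, shift-invariant subset of `A^{ℤ^d}`. -/
def IsSubshift {A : Type*} [TopologicalSpace A] {d : ℕ} (X : Set (Zd d → A)) : Prop :=
  IsClosed X ∧ ∀ t : Zd d, ∀ x ∈ X, shift t x ∈ X

/-- The finite pattern with shape `S` and values `w` occurs (as some translate) in `x`. -/
def Occurs {A : Type*} {d : ℕ} (S : Finset (Zd d)) (w : Zd d → A) (x : Zd d → A) : Prop :=
  ∃ t : Zd d, ∀ s ∈ S, x (s + t) = w s

/-- The subshift defined by a set `F` of forbidden finite patterns. -/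
def SFTof {A : Type*} {d : ℕ} (F : Set (Finset (Zd d) × (Zd d → A))) : Set (Zd d → A) :=
  {x | ∀ p ∈ F, ¬ Occurs p.1 p.2 x}

/-- `X` is a shift of finite type. -/
def IsSFT {A : Type*} {d : ℕ} (X : Set (Zd d → A)) : Prop :=
  ∃ F : Set (Finset (Zd d) × (Zd d → A)), F.Finite ∧ X = SFTof F

/-- The pattern given by the values of `w` on the shape `S` is in the language of `X`
(`S` may be infinite). -/
def InLang {A : Type*} {d : ℕ} (X : Set (Zd d → A)) (S : Set (Zd d)) (w : Zd d → A) : Prop :=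
  ∃ x ∈ X, ∀ s ∈ S, x s = w s

/-- The pattern with (possibly infinite) shape `S` and values `w` contains no translate of a
forbidden pattern of `F` fitting entirely inside `S`. -/
def PatternAvoids {A : Type*} {d : ℕ} (F : Set (Finset (Zd d) × (Zd d → A)))
    (S : Set (Zd d)) (w : Zd d → A) : Prop :=
  ∀ p ∈ F, ∀ t : Zd d, (∀ s ∈ p.1, s + t ∈ S) → ¬ (∀ s ∈ p.1, w (s + t) = p.2 s)

/-- The hypercube `Q_g = [-g,g]^d`. -/
noncomputable def Qbox (d g : ℕ) : Finset (Zd d) :=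
  Fintype.piFinset fun _ : Fin d => Finset.Icc (-(g : ℤ)) (g : ℤ)

/-- The hypercube `C_n = [0,n-1]^d`. -/
noncomputable def Cbox (d n : ℕ) : Finset (Zd d) :=
  Fintype.piFinset fun _ : Fin d => Finset.Icc 0 ((n : ℤ) - 1)

/-- `F` witnesses the `g`-extension property: whenever a pattern on a finite shape `S` can be
extended to a pattern on `S + Q_g` containing no pattern from `F`, it is in the language of
`SFTof F`. -/
def HasGExtension {A : Type*} {d : ℕ} (F : Set (Finset (Zd d) × (Zd d → A))) (g : ℕ) : Prop :=
  ∀ (S : Finset (Zd d)) (w : Zd d → A),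
    (∃ w' : Zd d → A, (∀ s ∈ S, w' s = w s) ∧ PatternAvoids F (↑(S + Qbox d g)) w') →
    InLang (SFTof F) (↑S) w

/-- `X` has the `g`-extension property: some finite forbidden set inducing `X` witnesses it. -/
def HasGExtProp {A : Type*} {d : ℕ} (X : Set (Zd d → A)) (g : ℕ) : Prop :=
  ∃ F : Set (Finset (Zd d) × (Zd d → A)), F.Finite ∧ X = SFTof F ∧ HasGExtension F g

/-- Number of patterns of shape `S` in the language of `X`. -/
noncomputable def LangCard {A : Type*} {d : ℕ} (X : Set (Zd d → A)) (S : Finset (Zd d)) : ℕ :=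
  Nat.card {w : {v : Zd d // v ∈ S} → A // ∃ x ∈ X, ∀ s : {v : Zd d // v ∈ S}, x s.1 = w s}

/-- `h` is the topological entropy of `X` (as a limit). -/
def HasEntropy {A : Type*} {d : ℕ} (X : Set (Zd d → A)) (h : ℝ) : Prop :=
  Tendsto (fun n : ℕ => Real.log (LangCard X (Cbox d n)) / (n : ℝ) ^ d) atTop (nhds h)

/-- A factor map from `X` onto `Y`: continuous, surjective, shift-commuting. -/
def IsFactorMap {A B : Type*} [TopologicalSpace A] [TopologicalSpace B] {d : ℕ}
    (X : Set (Zd d → A)) (Y : Set (Zd d → B)) (φ : (Zd d → A) → (Zd d → B)) : Prop :=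
  ContinuousOn φ X ∧ Set.MapsTo φ X Y ∧ Set.SurjOn φ X Y ∧
    ∀ x ∈ X, ∀ t : Zd d, φ (shift t x) = shift t (φ x)

/-- `φ` is a sliding block code of radius `r` on `X`. -/
def HasRadius {A B : Type*} {d : ℕ} (X : Set (Zd d → A))
    (φ : (Zd d → A) → (Zd d → B)) (r : ℕ) : Prop :=
  ∀ x ∈ X, ∀ x' ∈ X, ∀ t : Zd d,
    (∀ s : Zd d, (∀ i, |s i - t i| ≤ (r : ℤ)) → x s = x' s) → φ x t = φ x' t

/-- A first offender for `X`: a finite pattern not in the language of `X` all of whose proper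
subpatterns are in the language. -/
def FirstOffender {A : Type*} {d : ℕ} (X : Set (Zd d → A)) (S : Finset (Zd d))
    (w : Zd d → A) : Prop :=
  ¬ InLang X (↑S) w ∧ ∀ T : Finset (Zd d), T ⊂ S → InLang X (↑T) w

/-- The pattern `(S', w')` is a translate of the pattern `(S, w)`. -/
def IsTranslate {A : Type*} {d : ℕ} (S : Finset (Zd d)) (w : Zd d → A)
    (S' : Finset (Zd d)) (w' : Zd d → A) : Prop :=
  ∃ t : Zd d, S' = S.image (· + t) ∧ ∀ s ∈ S, w' (s + t) = w s

/-- `X` has (up to translation) only finitely many first offenders. -/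
def FinitelyManyFirstOffenders {A : Type*} {d : ℕ} (X : Set (Zd d → A)) : Prop :=
  ∃ P : Set (Finset (Zd d) × (Zd d → A)), P.Finite ∧
    (∀ p ∈ P, FirstOffender X p.1 p.2) ∧
    ∀ S w, FirstOffender X S w → ∃ p ∈ P, IsTranslate p.1 p.2 S w

/-- The shape `S` has `ℓ∞`-diameter at most `g`. -/
def DiamLE {d : ℕ} (S : Finset (Zd d)) (g : ℕ) : Prop :=
  ∀ s ∈ S, ∀ s' ∈ S, ∀ i, |s i - s' i| ≤ (g : ℤ)

/-- `R` is a hyperrectangle. -/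
def IsHyperrect {d : ℕ} (R : Finset (Zd d)) : Prop :=
  ∃ l u : Zd d, R = Fintype.piFinset fun i => Finset.Icc (l i) (u i)

/-- The `ℓ∞`-distance between `R` and `R'` is greater than `γ`. -/
def FarApart {d : ℕ} (R R' : Finset (Zd d)) (γ : ℕ) : Prop :=
  ∀ a ∈ R, ∀ b ∈ R', ∃ i, (γ : ℤ) < |a i - b i|

/-- `X` is block gluing with gap `g`. -/
def BlockGluing {A : Type*} {d : ℕ} (X : Set (Zd d → A)) (g : ℕ) : Prop :=
  ∀ R R' : Finset (Zd d), IsHyperrect R → IsHyperrect R' → FarApart R R' g →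
    ∀ w w' : Zd d → A, InLang X (↑R) w → InLang X (↑R') w' →
      ∃ x ∈ X, (∀ s ∈ R, x s = w s) ∧ ∀ s ∈ R', x s = w' s

/-- The inner `g`-boundary of `V`: sites of `V` within `ℓ∞`-distance `g` of the complement. -/
def innerBoundary {d : ℕ} (g : ℕ) (V : Set (Zd d)) : Set (Zd d) :=
  {t | t ∈ V ∧ ∃ t', t' ∉ V ∧ ∀ i, |t i - t' i| ≤ (g : ℤ)}

open Classical in
/-- `star` is a safe symbol for `X`. -/
def SafeSymbol {A : Type*} {d : ℕ} (X : Set (Zd d → A)) (star : A) : Prop :=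
  ∀ x ∈ X, ∀ S : Set (Zd d), (fun t => if t ∈ S then star else x t) ∈ X

/-- The `i`-th unit vector in `ℤ^d`. -/
def unitVec (d : ℕ) (i : Fin d) : Zd d := Pi.single i 1

/-- The set of domino (nearest-neighbor) forbidden patterns associated to forbidden
adjacent pairs `Forb i a b` (meaning: `a` at a site, `b` at the site plus `e_i`, forbidden). -/
def nnForbSet {A : Type*} (d : ℕ) (Forb : Fin d → A → A → Prop) :
    Set (Finset (Zd d) × (Zd d → A)) :=
  {p | ∃ i a b, Forb i a b ∧ p.1 = {0, unitVec d i} ∧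
      p.2 = fun v => if v = unitVec d i then b else a}


section StmtFiveAux

variable {A : Type*} {d : ℕ}

lemma shift_mem_SFTof {F : Set (Finset (Zd d) × (Zd d → A))} {x : Zd d → A}
    (hx : x ∈ SFTof F) (t : Zd d) : shift t x ∈ SFTof F := by
  intro p hp h
  obtain ⟨u, hu⟩ := h
  refine hx p hp ⟨u + t, fun s hs => ?_⟩
  have := hu s hs
  simp only [shift] at this
  rwa [← add_assoc]

lemma inLang_translate {X : Set (Zd d → A)} (hinv : ∀ t : Zd d, ∀ x ∈ X, shift t x ∈ X)
    {T : Finset (Zd d)} {t : Zd d} {w v : Zd d → A} (h : ∀ s ∈ T, w (s + t) = v s) :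
    InLang X ↑(T.image (· + t)) w ↔ InLang X ↑T v := by
  constructor
  · rintro ⟨x, hx, hag⟩
    refine ⟨shift t x, hinv t x hx, fun s hs => ?_⟩
    have hmem : (s + t) ∈ (↑(T.image (· + t)) : Set (Zd d)) := by
      simp only [Finset.coe_image, Set.mem_image, Finset.mem_coe]
      exact ⟨s, hs, rfl⟩
    have := hag (s + t) hmem
    simp only [shift]
    rw [this, h s hs]
  · rintro ⟨x, hx, hag⟩
    refine ⟨shift (-t) x, hinv (-t) x hx, fun s' hs' => ?_⟩
    simp only [Finset.coe_image, Set.mem_image, Finset.mem_coe] at hs'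
    obtain ⟨s, hs, rfl⟩ := hs'
    show x (s + t + -t) = w (s + t)
    rw [add_neg_cancel_right, hag s hs, h s hs]

lemma exists_minimal_offender {X : Set (Zd d → A)} (S : Finset (Zd d)) :
    ∀ w : Zd d → A, ¬ InLang X ↑S w → ∃ T ⊆ S, FirstOffender X T w := by
  induction S using Finset.strongInduction with
  | _ S ih =>
    intro w hw
    by_cases h : ∀ T : Finset (Zd d), T ⊂ S → InLang X ↑T w
    · exact ⟨S, subset_rfl, hw, h⟩
    · push_neg at h
      obtain ⟨T, hT, hT2⟩ := h
      obtain ⟨T', hT', hoff⟩ := ih T hT w hT2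
      exact ⟨T', hT'.trans hT.subset, hoff⟩

lemma firstOffender_translate {X : Set (Zd d → A)}
    (hinv : ∀ t : Zd d, ∀ x ∈ X, shift t x ∈ X) {S T : Finset (Zd d)} {w v : Zd d → A}
    {t : Zd d} (hS : S = T.image (· + t)) (hag : ∀ s ∈ T, w (s + t) = v s)
    (hoff : FirstOffender X S w) : FirstOffender X T v := by
  subst hS
  refine ⟨fun h => hoff.1 ((inLang_translate hinv hag).mpr h), fun T' hT' => ?_⟩
  have h1 : T'.image (· + t) ⊂ T.image (· + t) :=
    (Finset.image_ssubset_image (add_left_injective t)).mpr hT'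
  exact (inLang_translate hinv (fun s hs => hag s (hT'.subset hs))).mp (hoff.2 _ h1)

lemma Qbox_zero : Qbox d 0 = {(0 : Zd d)} := by
  ext c
  simp only [Qbox, Fintype.mem_piFinset, Finset.mem_Icc, Finset.mem_singleton, funext_iff]
  constructor <;> intro h i <;> have := h i <;> simp only [Pi.zero_apply] at this ⊢ <;> omega

lemma add_Qbox_zero (S : Finset (Zd d)) : S + Qbox d 0 = S := by
  rw [Qbox_zero, Finset.add_singleton]
  simp

end StmtFiveAux

/-- a `ℤ^d` SFT has TSSM (equivalently, only finitely many first offenders) iff it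
has the `0`-extension property. -/

theorem stmt5 {A : Type*} [Fintype A] {d : ℕ} (X : Set (Zd d → A)) (hX : IsSFT X) :
    FinitelyManyFirstOffenders X ↔ HasGExtProp X 0 := by
  obtain ⟨F₀, hF₀fin, hXF₀⟩ := hX
  have hinv : ∀ t : Zd d, ∀ x ∈ X, shift t x ∈ X := by
    intro t x hx
    rw [hXF₀] at hx ⊢
    exact shift_mem_SFTof hx t
  constructor
  · rintro ⟨P, hPfin, hPoff, hPcover⟩
    have hXP : X = SFTof P := by
      ext x
      constructor
      · intro hx p hp hocc
        obtain ⟨t, ht⟩ := hocc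
        exact (hPoff p hp).1 ⟨shift t x, hinv t x hx, fun s hs => ht s hs⟩
      · intro hxP
        by_contra hx
        rw [hXF₀] at hx
        simp only [SFTof, Set.mem_setOf_eq] at hx
        push_neg at hx
        obtain ⟨p, hp, t, hu⟩ := hx
        have hT0 : ¬ InLang X ↑(p.1.image (· + t)) x := by
          rintro ⟨y, hy, hag⟩
          rw [hXF₀] at hy
          refine hy p hp ⟨t, fun s hs => ?_⟩
          have hmem : (s + t) ∈ (↑(p.1.image (· + t)) : Set (Zd d)) := by
            simp only [Finset.coe_image, Set.mem_image, Finset.mem_coe]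
            exact ⟨s, hs, rfl⟩
          rw [hag (s + t) hmem, hu s hs]
        obtain ⟨T, hTsub, hToff⟩ := exists_minimal_offender _ x hT0
        obtain ⟨q, hq, u, hTq, hagq⟩ := hPcover T x hToff
        exact hxP q hq ⟨u, hagq⟩
    refine ⟨P, hPfin, hXP, ?_⟩
    rintro S w ⟨w', hw'ag, havoid⟩
    rw [← hXP]
    by_contra h
    have hnot' : ¬ InLang X ↑S w' := by
      rintro ⟨y, hy, hag⟩
      exact h ⟨y, hy, fun s hs => (hag s hs).trans (hw'ag s hs)⟩
    obtain ⟨T, hTsub, hToff⟩ := exists_minimal_offender S w' hnot'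
    obtain ⟨q, hq, u, hTq, hagq⟩ := hPcover T w' hToff
    refine havoid q hq u (fun s hs => ?_) hagq
    have : s + u ∈ T := by
      rw [hTq]
      exact Finset.mem_image.mpr ⟨s, hs, rfl⟩
    have hsS : s + u ∈ S := hTsub this
    rw [add_Qbox_zero]
    exact hsS
  · rintro ⟨F, hFfin, hXF, hext⟩
    refine ⟨F ∩ {q | FirstOffender X q.1 q.2}, hFfin.inter_of_left _,
      fun p hp => hp.2, ?_⟩
    intro S w hoff
    have hfail : ¬ PatternAvoids F ↑(S + Qbox d 0) w := by
      intro hav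
      have := hext S w ⟨w, fun s _ => rfl, hav⟩
      rw [← hXF] at this
      exact hoff.1 this
    rw [add_Qbox_zero] at hfail
    simp only [PatternAvoids] at hfail
    push_neg at hfail
    obtain ⟨p, hp, t, hin, hmatch⟩ := hfail
    have hTsub : p.1.image (· + t) ⊆ S := by
      intro s' hs'
      obtain ⟨s, hs, rfl⟩ := Finset.mem_image.mp hs'
      exact hin s hs
    have hTnot : ¬ InLang X ↑(p.1.image (· + t)) w := by
      rintro ⟨y, hy, hag⟩
      rw [hXF] at hy
      refine hy p hp ⟨t, fun s hs => ?_⟩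
      have hmem : (s + t) ∈ (↑(p.1.image (· + t)) : Set (Zd d)) := by
        simp only [Finset.coe_image, Set.mem_image, Finset.mem_coe]
        exact ⟨s, hs, rfl⟩
      rw [hag (s + t) hmem, hmatch s hs]
    have hTeq : p.1.image (· + t) = S := by
      by_contra hne
      exact hTnot (hoff.2 _ (Finset.ssubset_iff_subset_ne.mpr ⟨hTsub, hne⟩))
    have hoffp : FirstOffender X p.1 p.2 :=
      firstOffender_translate hinv hTeq.symm hmatch hoff
    exact ⟨p, ⟨hp, hoffp⟩, t, hTeq.symm, hmatch⟩
end

section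
/- If a Z^d SFT X has only finitely many first offenders, and F denotes the (finite) set of its first offenders, then X = X(F) and X has the 0-extension property for F: every finite pattern that contains no first offender belongs to L(X). -/
open Pointwise Filter

/-- if `X` has only finitely many first offenders, with `P` a finite set of first
offenders containing every first offender up to translation, then `X = X(P)` and `P` witnesses the
`0`-extension property. -/
theorem stmt7 {A : Type*} [Fintype A] {d : ℕ} (X : Set (Zd d → A)) (hX : IsSFT X)
    (P : Set (Finset (Zd d) × (Zd d → A))) (hPfin : P.Finite)
    (hPoff : ∀ p ∈ P, FirstOffender X p.1 p.2)
    (hPall : ∀ S w, FirstOffender X S w → ∃ p ∈ P, IsTranslate p.1 p.2 S w) :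
    X = SFTof P ∧ HasGExtension P 0 := by
  classical
  obtain ⟨F, hFfin, hXF⟩ := hX
  -- Key lemma: every finite pattern avoiding P is in the language of X.
  have key : ∀ (S : Finset (Zd d)) (w : Zd d → A),
      PatternAvoids P (↑S) w → InLang X (↑S) w := by
    intro S w hav
    by_contra h
    obtain ⟨T, hTmem, hTmin⟩ := Finset.exists_min_image
      (S.powerset.filter (fun T : Finset (Zd d) => ¬InLang X (↑T) w)) Finset.card
      ⟨S, Finset.mem_filter.mpr ⟨Finset.mem_powerset.mpr (subset_refl S), h⟩⟩
    rw [Finset.mem_filter, Finset.mem_powerset] at hTmem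
    have hoff : FirstOffender X T w := by
      refine ⟨hTmem.2, fun T' hT' => ?_⟩
      by_contra h'
      have hmem : T' ∈ S.powerset.filter (fun T : Finset (Zd d) => ¬InLang X (↑T) w) := by
        rw [Finset.mem_filter, Finset.mem_powerset]
        exact ⟨hT'.subset.trans hTmem.1, h'⟩
      exact absurd (Finset.card_lt_card hT') (not_lt.mpr (hTmin T' hmem))
    obtain ⟨p, hp, t, hTeq, hvals⟩ := hPall T w hoff
    refine hav p hp t (fun s hs => ?_) hvals
    have : s + t ∈ T := by rw [hTeq]; exact Finset.mem_image_of_mem _ hs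
    exact hTmem.1 this
  have hXP : X = SFTof P := by
    apply Set.Subset.antisymm
    · rintro x hx p hp ⟨t, ht⟩
      have hoff := hPoff p hp
      apply hoff.1
      refine ⟨shift t x, ?_, fun s hs => ht s hs⟩
      rw [hXF] at hx ⊢
      rintro q hq ⟨u, hu⟩
      exact hx q hq ⟨u + t, fun s hs => by
        simpa [shift, add_assoc] using hu s hs⟩
    · intro x hx
      rw [hXF]
      rintro q hq ⟨t, ht⟩
      have hav : PatternAvoids P ↑(q.1.image (· + t)) x := by
        intro p hp u _ hval
        exact hx p hp ⟨u, hval⟩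
      obtain ⟨y, hy, hyx⟩ := key _ x hav
      rw [hXF] at hy
      refine hy q hq ⟨t, fun s hs => ?_⟩
      rw [hyx (s + t) (by exact_mod_cast Finset.mem_image_of_mem _ hs)]
      exact ht s hs
  refine ⟨hXP, ?_⟩
  rintro S w ⟨w', hw'S, hav⟩
  have hQ : S + Qbox d 0 = S := by
    have h0 : Qbox d 0 = {0} := by
      ext v
      simp [Qbox, Fintype.mem_piFinset, Finset.mem_singleton, funext_iff,
        le_antisymm_iff]
      tauto
    rw [h0, Finset.add_singleton]
    simp
  rw [hQ] at hav
  obtain ⟨x, hxX, hxw⟩ := key S w' hav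
  exact ⟨x, hXP ▸ hxX, fun s hs => (hxw s hs).trans (hw'S s hs)⟩
end

section
/- The finite extension property is a topological conjugacy invariant: if X and Y are topologically conjugate Z^d SFTs and X has the g-extension property for some g ∈ ℕ, then Y has the g'-extension property for some g' ∈ ℕ. More precisely, if X has the g-extension property, φ : X → Y is a conjugacy with radius r and inverse radius s, then Y has the (g + r + s)-extension property. -/
open Pointwise Filter

lemma mem_Qbox {d k : ℕ} {v : Zd d} : v ∈ Qbox d k ↔ ∀ i, |v i| ≤ (k : ℤ) := by
  simp [Qbox, Fintype.mem_piFinset, Finset.mem_Icc, abs_le]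

lemma mem_add_Qbox {d : ℕ} {S : Finset (Zd d)} {k : ℕ} {x : Zd d} :
    x ∈ S + Qbox d k ↔ ∃ p ∈ S, ∀ i, |x i - p i| ≤ (k : ℤ) := by
  rw [Finset.mem_add]
  constructor
  · rintro ⟨y, hy, z, hz, rfl⟩
    exact ⟨y, hy, fun i => by simpa using mem_Qbox.mp hz i⟩
  · rintro ⟨p, hp, h⟩
    exact ⟨p, hp, x - p, mem_Qbox.mpr (fun i => by simpa using h i), by abel⟩

/-- Canonical list of patterns of shape `E` not in the language of `Y`. -/
def patsOn {B : Type*} {d : ℕ} (Y : Set (Zd d → B)) (b₀ : B) (E : Finset (Zd d)) :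
    Set (Finset (Zd d) × (Zd d → B)) :=
  {q | q.1 = E ∧ (∀ v, v ∉ E → q.2 v = b₀) ∧ ¬ InLang Y (↑E) q.2}

lemma patsOn_finite {B : Type*} [Finite B] {d : ℕ} (Y : Set (Zd d → B)) (b₀ : B)
    (E : Finset (Zd d)) : (patsOn Y b₀ E).Finite := by
  have hinj : Set.InjOn (fun q : Finset (Zd d) × (Zd d → B) =>
      fun v : {v // v ∈ E} => q.2 v.1) (patsOn Y b₀ E) := by
    rintro ⟨S1, f1⟩ h1 ⟨S2, f2⟩ h2 heq
    obtain ⟨hS1, hf1, -⟩ := h1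
    obtain ⟨hS2, hf2, -⟩ := h2
    simp only [Prod.mk.injEq]
    refine ⟨hS1.trans hS2.symm, funext fun v => ?_⟩
    by_cases hv : v ∈ E
    · exact congrFun heq ⟨v, hv⟩
    · exact (hf1 v hv).trans (hf2 v hv).symm
  exact Set.Finite.of_finite_image (Set.toFinite _) hinj

lemma patsOn_not_inlang {B : Type*} {d : ℕ} {Y : Set (Zd d → B)} {b₀ : B}
    {E : Finset (Zd d)} {q : Finset (Zd d) × (Zd d → B)} (h : q ∈ patsOn Y b₀ E) :
    ¬ InLang Y (↑q.1) q.2 := by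
  obtain ⟨h1, -, h3⟩ := h
  rw [h1]; exact h3

lemma avoids_window {B : Type*} {d : ℕ} {Y : Set (Zd d → B)}
    (hYsh : ∀ t : Zd d, ∀ y ∈ Y, shift t y ∈ Y)
    {F' : Set (Finset (Zd d) × (Zd d → B))} {W : Finset (Zd d)} {w' : Zd d → B}
    (hAv : PatternAvoids F' (↑W) w') {b₀ : B} {E : Finset (Zd d)}
    (hsub : patsOn Y b₀ E ⊆ F') {t : Zd d} (ht : ∀ v ∈ E, v + t ∈ W) :
    ∃ z ∈ Y, ∀ v ∈ E, z (v + t) = w' (v + t) := by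
  classical
  set u : Zd d → B := fun v => if v ∈ E then w' (v + t) else b₀ with hu
  by_cases hL : InLang Y (↑E) u
  · obtain ⟨y, hy, hagy⟩ := hL
    refine ⟨shift (-t) y, hYsh _ _ hy, fun v hv => ?_⟩
    have h1 : shift (-t) y (v + t) = y v := by
      simp [shift, add_neg_cancel_right]
    rw [h1, hagy v (Finset.mem_coe.mpr hv), hu]
    simp [hv]
  · exfalso
    have hmem : (E, u) ∈ patsOn Y b₀ E := ⟨rfl, fun v hv => by simp [hu, hv], hL⟩
    exact hAv (E, u) (hsub hmem) t (fun v hv => Finset.mem_coe.mpr (ht v hv))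
      (fun v hv => by simp [hu, hv])

lemma abs_le_of_natAbs_le {n : ℕ} {a : ℤ} (h : a.natAbs ≤ n) : |a| ≤ (n : ℤ) := by
  rw [abs_le]; omega
/-- the finite extension property is a conjugacy invariant; precisely, if `X` has the
`g`-extension property and `phi : X → Y` is a conjugacy with radius `r` whose inverse has radius
`s`, then `Y` has the `(g + r + s)`-extension property. -/
theorem stmt9 {A B : Type*} [Fintype A] [Fintype B] [TopologicalSpace A] [DiscreteTopology A]
    [TopologicalSpace B] [DiscreteTopology B] {d : ℕ}
    (X : Set (Zd d → A)) (Y : Set (Zd d → B)) (hX : IsSFT X) (hY : IsSFT Y)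
    (hXsub : IsSubshift X) (hYsub : IsSubshift Y)
    (phi : (Zd d → A) → (Zd d → B)) (psi : (Zd d → B) → (Zd d → A))
    (hphimem : Set.MapsTo phi X Y) (hpsimem : Set.MapsTo psi Y X)
    (hinv1 : ∀ x ∈ X, psi (phi x) = x) (hinv2 : ∀ y ∈ Y, phi (psi y) = y)
    (hphicomm : ∀ x ∈ X, ∀ t : Zd d, phi (shift t x) = shift t (phi x))
    (hpsicomm : ∀ y ∈ Y, ∀ t : Zd d, psi (shift t y) = shift t (psi y))
    (r s g : ℕ) (hr : HasRadius X phi r) (hs : HasRadius Y psi s)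
    (hg : HasGExtProp X g) :
    HasGExtProp Y (g + r + s) := by
  classical
  obtain ⟨F, hFfin, hXF, hFg⟩ := hg
  obtain ⟨G, hGfin, hYG⟩ := hY
  rcases Y.eq_empty_or_nonempty with hYe | ⟨y₀, hy₀⟩
  · rcases isEmpty_or_nonempty B with hB | hB
    · refine ⟨∅, Set.finite_empty, ?_, ?_⟩
      · ext x
        exact (hB.false (x 0)).elim
      · intro S w _
        exact (hB.false (w 0)).elim
    · obtain ⟨b₁⟩ := hB
      refine ⟨{(∅, fun _ => b₁)}, Set.finite_singleton _, ?_, ?_⟩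
      · rw [hYe]
        ext x
        simp only [Set.mem_empty_iff_false, false_iff]
        intro hx
        exact hx (∅, fun _ => b₁) rfl ⟨0, fun v hv => absurd hv (Finset.notMem_empty v)⟩
      · rintro S w ⟨w', -, hAv⟩
        exact absurd (fun v hv => absurd hv (Finset.notMem_empty v))
          (hAv (∅, fun _ => b₁) rfl 0 (fun v hv => absurd hv (Finset.notMem_empty v)))
  · -- main case: Y nonempty
    set b₀ : B := y₀ 0 with hb₀
    set a₀ : A := psi y₀ 0 with ha₀
    -- bound on the shapes of G
    obtain ⟨m, hGQ⟩ : ∃ m : ℕ, ∀ p ∈ G, ∀ v ∈ p.1, v ∈ Qbox d m := by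
      refine ⟨hGfin.toFinset.sup
        (fun p => p.1.sup fun v => Finset.univ.sup fun i => (v i).natAbs), ?_⟩
      intro p hp v hv
      rw [mem_Qbox]
      intro i
      have h1 : (v i).natAbs ≤ hGfin.toFinset.sup
          (fun p => p.1.sup fun v => Finset.univ.sup fun i => (v i).natAbs) := by
        calc (v i).natAbs ≤ Finset.univ.sup (fun i => (v i).natAbs) :=
              Finset.le_sup (f := fun i => (v i).natAbs) (Finset.mem_univ i)
          _ ≤ p.1.sup (fun v => Finset.univ.sup fun i => (v i).natAbs) :=
              Finset.le_sup (f := fun v => Finset.univ.sup fun i => (v i).natAbs) hv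
          _ ≤ _ := Finset.le_sup (f := fun p => p.1.sup fun v =>
              Finset.univ.sup fun i => (v i).natAbs) (hGfin.mem_toFinset.mpr hp)
      exact abs_le_of_natAbs_le h1
    set F' : Set (Finset (Zd d) × (Zd d → B)) :=
      patsOn Y b₀ (Qbox d (r + s)) ∪ patsOn Y b₀ (Qbox d m) ∪
        ⋃ p ∈ F, patsOn Y b₀ (p.1 + Qbox d s) with hF'
    have hF'fin : F'.Finite := by
      rw [hF']
      exact ((patsOn_finite _ _ _).union (patsOn_finite _ _ _)).union
        (Set.Finite.biUnion hFfin (fun p _ => patsOn_finite _ _ _))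
    have hsub2 : patsOn Y b₀ (Qbox d (r + s)) ⊆ F' := by
      rw [hF']; intro q hq; exact Set.mem_union_left _ (Set.mem_union_left _ hq)
    have hsub3 : patsOn Y b₀ (Qbox d m) ⊆ F' := by
      rw [hF']; intro q hq; exact Set.mem_union_left _ (Set.mem_union_right _ hq)
    have hsub4 : ∀ p ∈ F, patsOn Y b₀ (p.1 + Qbox d s) ⊆ F' := by
      intro p hp
      rw [hF']; intro q hq; exact Set.mem_union_right _ (Set.mem_biUnion hp hq)
    have hF'nl : ∀ q ∈ F', ¬ InLang Y (↑q.1) q.2 := by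
      intro q hq
      rw [hF'] at hq
      rcases hq with (h | h) | h
      · exact patsOn_not_inlang h
      · exact patsOn_not_inlang h
      · simp only [Set.mem_iUnion] at h
        obtain ⟨p, hp, h⟩ := h
        exact patsOn_not_inlang h
    have hYF' : Y = SFTof F' := by
      ext x
      constructor
      · intro hxY
        simp only [SFTof, Set.mem_setOf_eq]
        rintro q hq ⟨t, hocc⟩
        exact hF'nl q hq ⟨shift t x, hYsub.2 t x hxY,
          fun v' hv' => hocc v' (Finset.mem_coe.mp hv')⟩
      · intro hx
        simp only [SFTof, Set.mem_setOf_eq] at hx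
        rw [hYG]
        rintro p hp ⟨t, hocc⟩
        set u : Zd d → B := fun v => if v ∈ Qbox d m then x (v + t) else b₀ with huu
        have hL : InLang Y (↑(Qbox d m)) u := by
          by_contra hni
          have hmem : (Qbox d m, u) ∈ patsOn Y b₀ (Qbox d m) :=
            ⟨rfl, fun v hv => by simp [huu, hv], hni⟩
          exact hx _ (hsub3 hmem) ⟨t, fun v hv => by simp [huu, hv]⟩
        obtain ⟨y, hy, hagy⟩ := hL
        rw [hYG] at hy
        refine hy p hp ⟨0, fun v hv => ?_⟩
        have h1 : y (v + 0) = u v := by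
          rw [add_zero]; exact hagy v (Finset.mem_coe.mpr (hGQ p hp v hv))
        rw [h1, huu]
        simp only [if_pos (hGQ p hp v hv)]
        exact hocc v hv
    refine ⟨F', hF'fin, hYF', ?_⟩
    rintro S w ⟨w', hw'S, hAvoid⟩
    rw [← hYF']
    -- the pulled-back pattern on the A-side
    set v : Zd d → A := fun t =>
      if h : ∃ z, z ∈ Y ∧ ∀ q ∈ Qbox d s, z (q + t) = w' (q + t)
      then psi h.choose t else a₀ with hvdef
    have hveq : ∀ t : Zd d, ∀ z ∈ Y, (∀ q ∈ Qbox d s, z (q + t) = w' (q + t)) →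
        v t = psi z t := by
      intro t z hz hzw
      have hex : ∃ z, z ∈ Y ∧ ∀ q ∈ Qbox d s, z (q + t) = w' (q + t) := ⟨z, hz, hzw⟩
      simp only [hvdef]
      rw [dif_pos hex]
      obtain ⟨hzY, hzw'⟩ := hex.choose_spec
      refine hs _ hzY z hz t (fun s' hs' => ?_)
      have hq : s' - t ∈ Qbox d s := mem_Qbox.mpr (fun i => by simpa using hs' i)
      have h1 := hzw' (s' - t) hq
      have h2 := hzw (s' - t) hq
      rw [sub_add_cancel] at h1 h2
      rw [h1, h2]
    -- Step 2: the pattern v avoids F on (S + Q_r) + Q_g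
    have hPA : PatternAvoids F (↑(S + Qbox d r + Qbox d g)) v := by
      rintro p hp t₀ hss hmatch
      have hshape : ∀ a ∈ p.1, ∃ c ∈ S, ∀ i, |a i + t₀ i - c i| ≤ (g : ℤ) + r := by
        intro a ha
        have h0 := Finset.mem_coe.mp (hss a ha)
        obtain ⟨y1, hy1, hby⟩ := mem_add_Qbox.mp h0
        obtain ⟨c, hc, hbc⟩ := mem_add_Qbox.mp hy1
        refine ⟨c, hc, fun i => ?_⟩
        have h1 := hby i
        have h2 := hbc i
        have h3 : (a + t₀) i = a i + t₀ i := rfl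
        rw [h3] at h1
        rw [abs_le] at h1 h2 ⊢
        omega
      have hmemb : ∀ u ∈ p.1 + Qbox d s, u + t₀ ∈ S + Qbox d (g + r + s) := by
        intro u hu
        obtain ⟨a, ha, q, hq, rfl⟩ := Finset.mem_add.mp hu
        obtain ⟨c, hc, hac⟩ := hshape a ha
        refine mem_add_Qbox.mpr ⟨c, hc, fun i => ?_⟩
        have h1 := mem_Qbox.mp hq i
        have h2 := hac i
        have h3 : (a + q + t₀) i - c i = (a i + t₀ i - c i) + q i := by
          simp only [Pi.add_apply]; ring
        rw [h3]
        rw [abs_le] at h1 h2 ⊢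
        push_cast
        omega
      obtain ⟨z, hz, hzw⟩ := avoids_window hYsub.2 hAvoid (hsub4 p hp) hmemb
      have hxt : psi z ∈ X := hpsimem hz
      rw [hXF] at hxt
      simp only [SFTof, Set.mem_setOf_eq] at hxt
      refine hxt p hp ⟨t₀, fun a ha => ?_⟩
      have h1 : v (a + t₀) = psi z (a + t₀) := by
        refine hveq (a + t₀) z hz (fun q hq => ?_)
        have h2 := hzw (a + q) (Finset.add_mem_add ha hq)
        have h3 : a + q + t₀ = q + (a + t₀) := by ring
        rw [h3] at h2
        exact h2
      rw [← h1]
      exact hmatch a ha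
    -- Step 3: extend v over S + Q_r inside X
    have hlang : InLang (SFTof F) (↑(S + Qbox d r)) v :=
      hFg (S + Qbox d r) v ⟨v, fun _ _ => rfl, hPA⟩
    rw [← hXF] at hlang
    obtain ⟨x, hxX, hxv⟩ := hlang
    -- Step 4: phi x realizes w on S
    refine ⟨phi x, hphimem hxX, fun u hu => ?_⟩
    have huS : u ∈ S := Finset.mem_coe.mp hu
    have hmemb2 : ∀ q ∈ Qbox d (r + s), q + u ∈ S + Qbox d (g + r + s) := by
      intro q hq
      refine mem_add_Qbox.mpr ⟨u, huS, fun i => ?_⟩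
      have h1 := mem_Qbox.mp hq i
      have h2 : (q + u) i - u i = q i := by simp
      rw [h2]
      rw [abs_le] at h1 ⊢
      push_cast
      omega
    obtain ⟨z, hz, hzw⟩ := avoids_window hYsub.2 hAvoid hsub2 hmemb2
    have hxx' : phi x u = phi (psi z) u := by
      refine hr x hxX (psi z) (hpsimem hz) u (fun s' hs' => ?_)
      have hsT : s' ∈ S + Qbox d r := mem_add_Qbox.mpr ⟨u, huS, fun i => hs' i⟩
      have h1 : x s' = v s' := hxv s' (Finset.mem_coe.mpr hsT)
      have h2 : v s' = psi z s' := by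
        refine hveq s' z hz (fun q hq => ?_)
        have hq' : q + s' - u ∈ Qbox d (r + s) := mem_Qbox.mpr (fun i => by
          have h3 := mem_Qbox.mp hq i
          have h4 := hs' i
          have h5 : (q + s' - u) i = q i + (s' i - u i) := by
            simp only [Pi.add_apply, Pi.sub_apply]; ring
          rw [h5]
          rw [abs_le] at h3 h4 ⊢
          push_cast
          omega)
        have h3 := hzw (q + s' - u) hq'
        have h4 : q + s' - u + u = q + s' := by ring
        rw [h4] at h3
        exact h3
      rw [h1, h2]
    rw [hxx', hinv2 z hz]
    have h5 := hzw 0 (mem_Qbox.mpr (fun i => by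
      simpa using Int.natCast_nonneg (r + s)))
    rw [zero_add] at h5
    rw [h5]
    exact hw'S u huS
end

section
/- If a Z^d SFT X has the g-extension property witnessed by a finite forbidden set F all of whose patterns have diameter at most D, then X is block gluing with gap 2g + D: for any hyperrectangles R, R' ⊆ Z^d with d(R, R') > 2g + D and any patterns w ∈ L_R(X), w' ∈ L_{R'}(X), there exists x ∈ X with x(R) = w and x(R') = w'. -/
open Pointwise Filter

lemma key_glue {A : Type*} {d : ℕ} (F : Set (Finset (Zd d) × (Zd d → A))) (g D : ℕ)
    (hext : HasGExtension F g) (hdiam : ∀ p ∈ F, DiamLE p.1 D)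
    (R R' : Finset (Zd d)) (i : Fin d) (c : ℤ)
    (hR : ∀ s ∈ R, s i ≤ c - g) (hR' : ∀ s ∈ R', c + g + D < s i)
    (w w' : Zd d → A) (hw : InLang (SFTof F) ↑R w) (hw' : InLang (SFTof F) ↑R' w') :
    ∃ x ∈ SFTof F, (∀ s ∈ R, x s = w s) ∧ ∀ s ∈ R', x s = w' s := by
  obtain ⟨x, hx, hxw⟩ := hw
  obtain ⟨x', hx', hxw'⟩ := hw'
  set y : Zd d → A := fun s => if s i ≤ c then x s else x' s with hy
  have hmem : ∀ v : Zd d, v ∈ ((R ∪ R') + Qbox d g : Finset (Zd d)) →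
      v i ≤ c ∨ c + D < v i := by
    intro v hv
    obtain ⟨r, hr, q, hq, hrq⟩ := Finset.mem_add.mp hv
    have hqi : -(g : ℤ) ≤ q i ∧ q i ≤ (g : ℤ) := by
      have := (Fintype.mem_piFinset.mp hq) i
      rwa [Finset.mem_Icc] at this
    have hvi : v i = r i + q i := by rw [← hrq]; rfl
    rcases Finset.mem_union.mp hr with h | h
    · have h1 := hR r h
      left; omega
    · have h1 := hR' r h
      right; omega
  have havoid : PatternAvoids F (↑((R ∪ R') + Qbox d g)) y := by
    intro p hp t hsub heq
    by_cases hcase : ∀ s ∈ p.1, (s + t) i ≤ c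
    · refine hx p hp ⟨t, fun s hs => ?_⟩
      have h1 := heq s hs
      have hc : s i + t i ≤ c := hcase s hs
      simpa [hy, hc] using h1
    · push_neg at hcase
      obtain ⟨s0, hs0, hs0c⟩ := hcase
      have hall : ∀ s ∈ p.1, c < (s + t) i := by
        intro s hs
        rcases hmem _ (hsub s hs) with h | h
        · exfalso
          have hd := hdiam p hp s hs s0 hs0 i
          have habs := abs_le.mp hd
          rcases hmem _ (hsub s0 hs0) with h0 | h0
          · omega
          · have e1 : (s + t) i = s i + t i := rfl
            have e2 : (s0 + t) i = s0 i + t i := rfl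
            omega
        · omega
      refine hx' p hp ⟨t, fun s hs => ?_⟩
      have h1 := heq s hs
      have h2 := hall s hs
      have hc : ¬ s i + t i ≤ c := not_le.mpr h2
      simpa [hy, hc] using h1
  obtain ⟨z, hz, hzy⟩ := hext (R ∪ R') y ⟨y, fun s _ => rfl, havoid⟩
  refine ⟨z, hz, fun s hs => ?_, fun s hs => ?_⟩
  · have h1 := hzy s (by simp [hs])
    have h2 : s i ≤ c := by have := hR s hs; omega
    rw [h1]
    simp only [hy, if_pos h2]
    exact hxw s hs
  · have h1 := hzy s (by simp [hs])
    have h2 : ¬ s i ≤ c := by have := hR' s hs; omega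
    rw [h1]
    simp only [hy, if_neg h2]
    exact hxw' s hs

/-- the `g`-extension property (with forbidden patterns of diameter at most `D`)
implies block gluing with gap `2g + D`. -/
theorem stmt10 {A : Type*} [Fintype A] {d : ℕ}
    (F : Set (Finset (Zd d) × (Zd d → A))) (hfin : F.Finite) (g D : ℕ)
    (hext : HasGExtension F g) (hdiam : ∀ p ∈ F, DiamLE p.1 D) :
    BlockGluing (SFTof F) (2 * g + D) := by
  intro R R' hRrect hR'rect hfar w w' hw hw'
  rcases R.eq_empty_or_nonempty with rfl | ⟨a, ha⟩
  · obtain ⟨x', hx', h⟩ := hw'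
    exact ⟨x', hx', by simp, h⟩
  rcases R'.eq_empty_or_nonempty with rfl | ⟨b, hb⟩
  · obtain ⟨x, hx, h⟩ := hw
    exact ⟨x, hx, h, by simp⟩
  obtain ⟨l, u, hRe⟩ := hRrect
  obtain ⟨l', u', hR'e⟩ := hR'rect
  have hRmem : ∀ s ∈ R, ∀ j, l j ≤ s j ∧ s j ≤ u j := by
    intro s hs j
    have := (Fintype.mem_piFinset.mp (hRe ▸ hs)) j
    rwa [Finset.mem_Icc] at this
  have hR'mem : ∀ s ∈ R', ∀ j, l' j ≤ s j ∧ s j ≤ u' j := by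
    intro s hs j
    have := (Fintype.mem_piFinset.mp (hR'e ▸ hs)) j
    rwa [Finset.mem_Icc] at this
  have hlu : ∀ j, l j ≤ u j := fun j => by have := hRmem a ha j; omega
  have hlu' : ∀ j, l' j ≤ u' j := fun j => by have := hR'mem b hb j; omega
  set a0 : Zd d := fun j => if u j < l' j then u j else if u' j < l j then l j
      else max (l j) (l' j) with ha0
  set b0 : Zd d := fun j => if u j < l' j then l' j else if u' j < l j then u' j
      else max (l j) (l' j) with hb0
  have ha0R : a0 ∈ R := by
    rw [hRe, Fintype.mem_piFinset]
    intro j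
    rw [Finset.mem_Icc]
    simp only [ha0]
    split_ifs with h1 h2
    · exact ⟨hlu j, le_refl _⟩
    · exact ⟨le_refl _, hlu j⟩
    · exact ⟨le_max_left _ _, max_le (hlu j) (by omega)⟩
  have hb0R : b0 ∈ R' := by
    rw [hR'e, Fintype.mem_piFinset]
    intro j
    rw [Finset.mem_Icc]
    simp only [hb0]
    split_ifs with h1 h2
    · exact ⟨le_refl _, hlu' j⟩
    · exact ⟨hlu' j, le_refl _⟩
    · exact ⟨le_max_right _ _, max_le (by omega) (hlu' j)⟩
  obtain ⟨i, hi⟩ := hfar a0 ha0R b0 hb0R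
  simp only [ha0, hb0] at hi
  push_cast at hi
  split_ifs at hi with h1 h2
  · -- u i < l' i, and |u i - l' i| > 2g + D
    have hsep : u i + (2 * g + D : ℤ) < l' i := by
      rcases lt_abs.mp hi with h' | h' <;> omega
    refine key_glue F g D hext hdiam R R' i (u i + g)
      (fun s hs => by have := hRmem s hs i; omega)
      (fun s hs => by have := hR'mem s hs i; omega) w w' hw hw'
  · -- u' i < l i
    have hsep : u' i + (2 * g + D : ℤ) < l i := by
      rcases lt_abs.mp hi with h' | h' <;> omega
    obtain ⟨x, hx, hA, hB⟩ := key_glue F g D hext hdiam R' R i (u' i + g)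
      (fun s hs => by have := hR'mem s hs i; omega)
      (fun s hs => by have := hRmem s hs i; omega) w' w hw' hw
    exact ⟨x, hx, hB, hA⟩
  · -- overlap: a0 i = b0 i, contradiction
    exfalso
    simp at hi
    omega
end

section
/- For d = 2, if a nearest-neighbor Z^2 SFT Y (defined by forbidding a set of pairs of adjacent letters) satisfies single-site fillability (SSF), then Y has the finite extension property; in fact Y has the g-extension property for some g (with the set of forbidden adjacent pairs serving as the forbidden list). -/
open Pointwise Filter

noncomputable def fillF {A : Type*} (e : ℕ ≃ Zd 2) (S : Finset (Zd 2)) (w : Zd 2 → A)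
    (a0 : A) (pick : (Fin 2 → A) → (Fin 2 → A) → A) : ℕ → A
  | n =>
    if e n ∈ S then w (e n)
    else
      pick
        (fun i => if e n + unitVec 2 i ∈ S then w (e n + unitVec 2 i)
          else if h : e.symm (e n + unitVec 2 i) < n then
            fillF e S w a0 pick (e.symm (e n + unitVec 2 i)) else a0)
        (fun i => if e n - unitVec 2 i ∈ S then w (e n - unitVec 2 i)
          else if h : e.symm (e n - unitVec 2 i) < n then
            fillF e S w a0 pick (e.symm (e n - unitVec 2 i)) else a0)
  termination_by n => n
  decreasing_by all_goals exact h

noncomputable def vAt {A : Type*} (e : ℕ ≃ Zd 2) (S : Finset (Zd 2)) (w : Zd 2 → A)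
    (a0 : A) (pick : (Fin 2 → A) → (Fin 2 → A) → A) (n : ℕ) (u : Zd 2) : A :=
  if u ∈ S then w u else if e.symm u < n then fillF e S w a0 pick (e.symm u) else a0

lemma fillF_of_mem {A : Type*} (e : ℕ ≃ Zd 2) (S : Finset (Zd 2)) (w : Zd 2 → A)
    (a0 : A) (pick : (Fin 2 → A) → (Fin 2 → A) → A) {n : ℕ} (h : e n ∈ S) :
    fillF e S w a0 pick n = w (e n) := by
  rw [fillF]; simp [h]

lemma fillF_of_not_mem {A : Type*} (e : ℕ ≃ Zd 2) (S : Finset (Zd 2)) (w : Zd 2 → A)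
    (a0 : A) (pick : (Fin 2 → A) → (Fin 2 → A) → A) {n : ℕ} (h : e n ∉ S) :
    fillF e S w a0 pick n =
      pick (fun i => vAt e S w a0 pick n (e n + unitVec 2 i))
        (fun i => vAt e S w a0 pick n (e n - unitVec 2 i)) := by
  rw [fillF]; simp only [h, if_false, vAt, dite_eq_ite]

lemma vAt_eq {A : Type*} (e : ℕ ≃ Zd 2) (S : Finset (Zd 2)) (w : Zd 2 → A)
    (a0 : A) (pick : (Fin 2 → A) → (Fin 2 → A) → A) {n : ℕ} {u : Zd 2}
    (h : u ∈ S ∨ e.symm u < n) :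
    vAt e S w a0 pick n u = fillF e S w a0 pick (e.symm u) := by
  rcases h with h | h
  · rw [vAt, if_pos h, fillF_of_mem]
    · rw [e.apply_symm_apply]
    · rw [e.apply_symm_apply]; exact h
  · by_cases hu : u ∈ S
    · rw [vAt, if_pos hu, fillF_of_mem] <;> rw [e.apply_symm_apply]; exact hu
    · rw [vAt, if_neg hu, if_pos h]

lemma fill_safe {A : Type*} {Forb : Fin 2 → A → A → Prop} (e : ℕ ≃ Zd 2) (S : Finset (Zd 2))
    (w : Zd 2 → A) (a0 : A) (pick : (Fin 2 → A) → (Fin 2 → A) → A)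
    (hpick : ∀ p m : Fin 2 → A, ∀ i, ¬ Forb i (pick p m) (p i) ∧ ¬ Forb i (m i) (pick p m))
    (hw : ∀ t ∈ S, ∀ i, t + unitVec 2 i ∈ S →
      ¬ Forb i (w t) (w (t + unitVec 2 i)))
    (t : Zd 2) (i : Fin 2) :
    ¬ Forb i (fillF e S w a0 pick (e.symm t))
      (fillF e S w a0 pick (e.symm (t + unitVec 2 i))) := by
  set x : Zd 2 → A := fun u => fillF e S w a0 pick (e.symm u) with hx
  set u := t + unitVec 2 i with hu
  show ¬ Forb i (x t) (x u)
  have het : ∀ v : Zd 2, e (e.symm v) = v := fun v => e.apply_symm_apply v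
  have hxmem : ∀ v ∈ S, x v = w v := by
    intro v hv
    show fillF e S w a0 pick (e.symm v) = w v
    rw [fillF_of_mem]
    · rw [het]
    · rw [het]; exact hv
  -- case where t is filled and u is "known" at fill time
  have caseT : t ∉ S → (u ∈ S ∨ e.symm u < e.symm t) → ¬ Forb i (x t) (x u) := by
    intro ht hcond
    have h1 : x t = pick (fun j => vAt e S w a0 pick (e.symm t) (t + unitVec 2 j))
        (fun j => vAt e S w a0 pick (e.symm t) (t - unitVec 2 j)) := by
      show fillF e S w a0 pick (e.symm t) = _
      rw [fillF_of_not_mem] <;> rw [het] ; exact ht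
    have h2 : vAt e S w a0 pick (e.symm t) (t + unitVec 2 i) = x u :=
      vAt_eq e S w a0 pick hcond
    rw [h1, ← h2]
    exact (hpick (fun j => vAt e S w a0 pick (e.symm t) (t + unitVec 2 j))
      (fun j => vAt e S w a0 pick (e.symm t) (t - unitVec 2 j)) i).1
  have caseU : u ∉ S → (t ∈ S ∨ e.symm t < e.symm u) → ¬ Forb i (x t) (x u) := by
    intro hus hcond
    have h1 : x u = pick (fun j => vAt e S w a0 pick (e.symm u) (u + unitVec 2 j))
        (fun j => vAt e S w a0 pick (e.symm u) (u - unitVec 2 j)) := by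
      show fillF e S w a0 pick (e.symm u) = _
      rw [fillF_of_not_mem] <;> rw [het] ; exact hus
    have hsub : u - unitVec 2 i = t := by rw [hu]; ring
    have h2 : vAt e S w a0 pick (e.symm u) (u - unitVec 2 i) = x t := by
      rw [hsub]; exact vAt_eq e S w a0 pick hcond
    rw [h1, ← h2]
    exact (hpick (fun j => vAt e S w a0 pick (e.symm u) (u + unitVec 2 j))
      (fun j => vAt e S w a0 pick (e.symm u) (u - unitVec 2 j)) i).2
  by_cases ht : t ∈ S
  · by_cases hus : u ∈ S
    · rw [hxmem t ht, hxmem u hus]; exact hw t ht i hus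
    · exact caseU hus (Or.inl ht)
  · by_cases hus : u ∈ S
    · exact caseT ht (Or.inl hus)
    · have hne : t ≠ u := by
        rw [hu]
        intro h
        have hz : unitVec 2 i = 0 := left_eq_add.mp h
        simpa [unitVec] using congrFun hz i
      have hne' : e.symm t ≠ e.symm u := fun h => hne (e.symm.injective h)
      rcases lt_or_gt_of_ne hne' with h | h
      · exact caseU hus (Or.inr h)
      · exact caseT ht (Or.inr h)

lemma unitVec_ne_zero (i : Fin 2) : unitVec 2 i ≠ 0 := by
  intro h; simpa [unitVec] using congrFun h i


/-- a nearest-neighbor `ℤ^2` SFT satisfying single-site fillability has the finite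
extension property, with the forbidden adjacent pairs serving as the forbidden list. -/
theorem stmt11 {A : Type*} [Fintype A] (Forb : Fin 2 → A → A → Prop)
    (hSSF : ∀ etaP etaM : Fin 2 → A, ∃ e : A, ∀ i : Fin 2,
      ¬ Forb i e (etaP i) ∧ ¬ Forb i (etaM i) e) :
    ∃ g : ℕ, HasGExtProp (SFTof (nnForbSet 2 Forb)) g ∧
      HasGExtension (nnForbSet 2 Forb) g := by
  have hext : HasGExtension (nnForbSet 2 Forb) 0 := by
    rintro S w ⟨w', hw'S, hAv⟩
    obtain ⟨D⟩ := nonempty_denumerable (Zd 2)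
    let e : ℕ ≃ Zd 2 := (@Denumerable.eqv (Zd 2) D).symm
    choose pick hpick using hSSF
    have hQ : (0 : Zd 2) ∈ Qbox 2 0 := by
      rw [Qbox, Fintype.mem_piFinset]
      intro j
      simp
    have hsub : ∀ v ∈ S, v ∈ S + Qbox 2 0 := by
      intro v hv
      rw [Finset.mem_add]
      exact ⟨v, hv, 0, hQ, add_zero v⟩
    have hw : ∀ t ∈ S, ∀ i : Fin 2, t + unitVec 2 i ∈ S →
        ¬ Forb i (w' t) (w' (t + unitVec 2 i)) := by
      intro t ht i hti hforb
      refine hAv ({0, unitVec 2 i}, fun v => if v = unitVec 2 i then w' (t + unitVec 2 i)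
          else w' t) ⟨i, w' t, w' (t + unitVec 2 i), hforb, rfl, rfl⟩ t ?_ ?_
      · intro s hs
        rcases Finset.mem_insert.mp hs with rfl | hs
        · rw [zero_add]; exact hsub t ht
        · rw [Finset.mem_singleton] at hs
          subst hs
          rw [add_comm (unitVec 2 i) t]
          exact hsub _ hti
      · intro s hs
        rcases Finset.mem_insert.mp hs with rfl | hs
        · simp only [zero_add, if_neg (Ne.symm (unitVec_ne_zero i))]
        · rw [Finset.mem_singleton] at hs
          subst hs
          rw [add_comm (unitVec 2 i) t]
          simp
    set x : Zd 2 → A := fun s => fillF e S w' (w 0) pick (e.symm s) with hx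
    have hxmem : ∀ v ∈ S, x v = w' v := by
      intro v hv
      show fillF e S w' (w 0) pick (e.symm v) = w' v
      rw [fillF_of_mem] <;> rw [e.apply_symm_apply]
      exact hv
    refine ⟨x, ?_, fun s hs => (hxmem s hs).trans (hw'S s hs)⟩
    rintro p ⟨i, a, b, hF, hp1, hp2⟩ ⟨t, hocc⟩
    have h0 : x t = a := by
      have := hocc 0 (by rw [hp1]; exact Finset.mem_insert_self _ _)
      rw [zero_add, hp2] at this
      rw [this]
      simp [Ne.symm (unitVec_ne_zero i)]
    have h1 : x (t + unitVec 2 i) = b := by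
      have := hocc (unitVec 2 i) (by rw [hp1]; simp)
      rw [add_comm (unitVec 2 i) t, hp2] at this
      rw [this]
      simp
    have key := fill_safe e S w' (w 0) pick hpick hw t i
    rw [show fillF e S w' (w 0) pick (e.symm t) = x t from rfl,
      show fillF e S w' (w 0) pick (e.symm (t + unitVec 2 i)) = x (t + unitVec 2 i) from rfl,
      h0, h1] at key
    exact key hF
  have hfin : (nnForbSet 2 Forb).Finite := by
    apply Set.Finite.subset (Set.finite_range (fun q : Fin 2 × A × A =>
      (({0, unitVec 2 q.1} : Finset (Zd 2)),
        fun v : Zd 2 => if v = unitVec 2 q.1 then q.2.2 else q.2.1)))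
    rintro ⟨P, W⟩ ⟨i, a, b, _, h1, h2⟩
    exact ⟨(i, a, b), by simp [← h1, ← h2]⟩
  refine ⟨0, ⟨nnForbSet 2 Forb, hfin, rfl, hext⟩, hext⟩
end

section
/- Let Y be a Z^d SFT containing a fixed point *^{Z^d} and having the g-extension property for a finite forbidden set F whose patterns have diameter at most g. Suppose u ∈ L(Y) is a pattern on a set U ⊆ Z^d, and S ⊆ Z^d is disjoint from U with the property that the configuration equal to u on U and * on S contains no pattern from F. Then the concatenated pattern on U ∪ S, after removing its inner g-boundary, belongs to L(Y). -/
open Pointwise Filter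

open Classical in
/-- one alternating step of the construction: if `u ∈ L(Y)` on `U`, `S` is disjoint
from `U`, and the configuration equal to `u` on `U` and to the safe background `star` on `S`
contains no pattern of `F`, then after removing the inner `g`-boundary of `U ∪ S` the combined
pattern is in `L(Y)`. -/
theorem stmt16 {A : Type*} [Fintype A] {d : ℕ}
    (F : Set (Finset (Zd d) × (Zd d → A))) (hfin : F.Finite) (g : ℕ)
    (hext : HasGExtension F g) (hdiam : ∀ p ∈ F, DiamLE p.1 g)
    (star : A) (hstar : (fun _ : Zd d => star) ∈ SFTof F)
    (U S : Set (Zd d)) (hdisj : Disjoint U S)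
    (u : Zd d → A) (hu : InLang (SFTof F) U u)
    (havoid : PatternAvoids F (U ∪ S) (fun t => if t ∈ U then u t else star)) :
    InLang (SFTof F) ((U ∪ S) \ innerBoundary g (U ∪ S))
      (fun t => if t ∈ U then u t else star) := by
  classical
  letI : TopologicalSpace A := ⊥
  haveI : DiscreteTopology A := ⟨rfl⟩
  set w : Zd d → A := fun t => if t ∈ U then u t else star with hw
  set V : Set (Zd d) := (U ∪ S) \ innerBoundary g (U ∪ S) with hV
  -- Step 1: the g-neighborhood of V stays in U ∪ S
  have hQ : ∀ t ∈ V, ∀ b ∈ Qbox d g, t + b ∈ U ∪ S := by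
    intro t ht b hb
    by_contra hmem
    refine ht.2 ⟨ht.1, t + b, hmem, fun i => ?_⟩
    have hbi := (Fintype.mem_piFinset.mp hb) i
    rw [Finset.mem_Icc] at hbi
    have : (t + b) i = t i + b i := rfl
    rw [this]
    rw [abs_le]
    constructor <;> linarith [hbi.1, hbi.2]
  -- Step 2: finite subsets of V are in the language
  have hfinlang : ∀ T : Finset (Zd d), (↑T : Set (Zd d)) ⊆ V →
      ∃ x ∈ SFTof F, ∀ s ∈ T, x s = w s := by
    intro T hT
    have hextT := hext T w ⟨w, fun s _ => rfl, ?_⟩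
    · obtain ⟨x, hx, hagree⟩ := hextT
      exact ⟨x, hx, fun s hs => hagree s hs⟩
    · intro p hp t hsub
      refine havoid p hp t (fun s hs => ?_)
      have hst : s + t ∈ (T + Qbox d g : Finset (Zd d)) := hsub s hs
      rw [Finset.mem_add] at hst
      obtain ⟨a, ha, b, hb, hab⟩ := hst
      rw [← hab]
      exact hQ a (hT ha) b hb
  -- Step 3: compactness
  let Z : Finset (Zd d) → Set (Zd d → A) :=
    fun T => SFTof F ∩ {x | ∀ s ∈ T, s ∈ V → x s = w s}
  have hclosedSFT : IsClosed (SFTof F) := by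
    have heq : SFTof F = ⋂ p ∈ F, {x : Zd d → A | Occurs p.1 p.2 x}ᶜ := by
      ext x; simp [SFTof]
    rw [heq]
    refine isClosed_biInter fun p hp => ?_
    refine IsOpen.isClosed_compl ?_
    have heq2 : {x : Zd d → A | Occurs p.1 p.2 x} =
        ⋃ t : Zd d, ⋂ s ∈ p.1, {x : Zd d → A | x (s + t) = p.2 s} := by
      ext x; simp [Occurs]
    rw [heq2]
    refine isOpen_iUnion fun t => isOpen_biInter_finset fun s hs => ?_
    show IsOpen ((fun x : Zd d → A => x (s + t)) ⁻¹' {p.2 s})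
    exact (isOpen_discrete ({p.2 s} : Set A)).preimage (continuous_apply (s + t))
  have hZclosed : ∀ T, IsClosed (Z T) := by
    intro T
    refine hclosedSFT.inter ?_
    have heq : {x : Zd d → A | ∀ s ∈ T, s ∈ V → x s = w s} =
        ⋂ s ∈ T, {x : Zd d → A | s ∈ V → x s = w s} := by
      ext x; simp
    rw [heq]
    refine isClosed_biInter fun s hs => ?_
    by_cases hsV : s ∈ V
    · have : {x : Zd d → A | s ∈ V → x s = w s} = {x : Zd d → A | x s = w s} := by
        ext x; simp [hsV]
      rw [this]
      exact isClosed_eq (continuous_apply s) continuous_const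
    · have : {x : Zd d → A | s ∈ V → x s = w s} = Set.univ := by
        ext x; simp [hsV]
      rw [this]; exact isClosed_univ
  have hZne : ∀ T, (Z T).Nonempty := by
    intro T
    obtain ⟨x, hx, hagree⟩ := hfinlang (T.filter (· ∈ V))
      (fun s hs => (Finset.mem_filter.mp hs).2)
    exact ⟨x, hx, fun s hs hsV => hagree s (Finset.mem_filter.mpr ⟨hs, hsV⟩)⟩
  have hdir : Directed (· ⊇ ·) Z := by
    intro T T'
    exact ⟨T ∪ T',
      fun x hx => ⟨hx.1, fun s hs hsV => hx.2 s (Finset.mem_union_left _ hs) hsV⟩,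
      fun x hx => ⟨hx.1, fun s hs hsV => hx.2 s (Finset.mem_union_right _ hs) hsV⟩⟩
  obtain ⟨x, hx⟩ := IsCompact.nonempty_iInter_of_directed_nonempty_isCompact_isClosed Z hdir hZne
    (fun T => (hZclosed T).isCompact) hZclosed
  have hx' := Set.mem_iInter.mp hx
  exact ⟨x, (hx' ∅).1, fun s hs => (hx' {s}).2 s (Finset.mem_singleton_self s) hs⟩
end
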